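/- Domain adaptation bound: for any hypothesis h in a class H of binary classifiers, the target risk satisfies R_{e'}(h) ≤ R_e(h) + (1/2) d_{HΔH}(P_e, P_{e'}) + λ*, where d_{HΔH}(P,Q) = 2 sup_{h,h' ∈ H} |P(h ≠ h') − Q(h ≠ h')| and λ* = min_{h' ∈ H} (R_e(h') + R_{e'}(h')). -/
import Mathlib


open MeasureTheory

/-- 0-1 risk of classifier `h` under input law `P` and labeling function `g`. -/
noncomputable def risk01 {Z : Type*} [MeasurableSpace Z]
    (P : Measure Z) (g h : Z → Bool) : ℝ :=
  (P {z | h z ≠ g z}).toReal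

/-- The `HΔH`-divergence between `P` and `Q` with respect to a hypothesis class `H`. -/
noncomputable def dHdH {Z : Type*} [MeasurableSpace Z]
    (H : Set (Z → Bool)) (P Q : Measure Z) : ℝ :=
  2 * ⨆ p : H × H,
    |(P {z | p.1.1 z ≠ p.2.1 z}).toReal - (Q {z | p.1.1 z ≠ p.2.1 z}).toReal|


lemma tri01 {Z : Type*} [MeasurableSpace Z] (P : Measure Z) [IsProbabilityMeasure P]
    (a b c : Z → Bool) :
    (P {z | a z ≠ c z}).toReal ≤ (P {z | a z ≠ b z}).toReal + (P {z | b z ≠ c z}).toReal := by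
  have hsub : {z | a z ≠ c z} ⊆ {z | a z ≠ b z} ∪ {z | b z ≠ c z} := by
    intro z hz
    by_cases hab : a z = b z
    · right; simpa [hab] using hz
    · left; exact hab
  have h1 : P {z | a z ≠ c z} ≤ P {z | a z ≠ b z} + P {z | b z ≠ c z} :=
    (measure_mono hsub).trans (measure_union_le _ _)
  have := ENNReal.toReal_mono (by finiteness) h1
  rwa [ENNReal.toReal_add (measure_ne_top _ _) (measure_ne_top _ _)] at this

lemma bdd {Z : Type*} [MeasurableSpace Z] (P Q : Measure Z)
    [IsProbabilityMeasure P] [IsProbabilityMeasure Q] (H : Set (Z → Bool)) :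
    BddAbove (Set.range fun p : H × H =>
      |(P {z | p.1.1 z ≠ p.2.1 z}).toReal - (Q {z | p.1.1 z ≠ p.2.1 z}).toReal|) := by
  refine ⟨1, ?_⟩
  rintro x ⟨p, rfl⟩
  have h1 : (P {z | p.1.1 z ≠ p.2.1 z}).toReal ≤ 1 := by
    simpa using ENNReal.toReal_mono ENNReal.one_ne_top (prob_le_one (μ := P))
  have h2 : (Q {z | p.1.1 z ≠ p.2.1 z}).toReal ≤ 1 := by
    simpa using ENNReal.toReal_mono ENNReal.one_ne_top (prob_le_one (μ := Q))
  have h3 : (0:ℝ) ≤ (P {z | p.1.1 z ≠ p.2.1 z}).toReal := ENNReal.toReal_nonneg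
  have h4 : (0:ℝ) ≤ (Q {z | p.1.1 z ≠ p.2.1 z}).toReal := ENNReal.toReal_nonneg
  rw [abs_sub_le_iff]; constructor <;> linarith

/-- domain adaptation bound. For every `h ∈ H`,
`R_{e'}(h) ≤ R_e(h) + (1/2) d_{HΔH}(P_e, P_{e'}) + λ*` with
`λ* = inf_{h' ∈ H} (R_e(h') + R_{e'}(h'))`. -/
theorem domain_adaptation_bound
    {Z : Type*} [MeasurableSpace Z]
    (Pe Pe' : Measure Z) [IsProbabilityMeasure Pe] [IsProbabilityMeasure Pe']
    (ge ge' : Z → Bool) (hge : Measurable ge) (hge' : Measurable ge')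
    (H : Set (Z → Bool)) (hH : H.Nonempty) (hHmeas : ∀ h ∈ H, Measurable h)
    (h : Z → Bool) (hh : h ∈ H) :
    risk01 Pe' ge' h ≤ risk01 Pe ge h + (1 / 2) * dHdH H Pe Pe' +
      ⨅ h' : H, (risk01 Pe ge h'.1 + risk01 Pe' ge' h'.1) := by
  have : Nonempty H := hH.to_subtype
  have key : ∀ h' : H,
      risk01 Pe' ge' h - risk01 Pe ge h - (1 / 2) * dHdH H Pe Pe' ≤
        risk01 Pe ge h'.1 + risk01 Pe' ge' h'.1 := by
    rintro ⟨h', hh'⟩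
    set A := (Pe' {z | h z ≠ h' z}).toReal with hA
    set B := (Pe {z | h z ≠ h' z}).toReal with hB
    have step1 : risk01 Pe' ge' h ≤ A + risk01 Pe' ge' h' := tri01 Pe' h h' ge'
    have step2 : A - B ≤ |B - A| := by
      have := le_abs_self (A - B)
      rw [abs_sub_comm] at this
      linarith
    have step3 : |B - A| ≤ ⨆ p : H × H,
        |(Pe {z | p.1.1 z ≠ p.2.1 z}).toReal - (Pe' {z | p.1.1 z ≠ p.2.1 z}).toReal| :=
      le_ciSup (bdd Pe Pe' H) (⟨⟨h, hh⟩, ⟨h', hh'⟩⟩ : H × H)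
    have step4 : B ≤ risk01 Pe ge h + risk01 Pe ge h' := by
      have t := tri01 Pe h ge h'
      have eq : {z | ge z ≠ h' z} = {z | h' z ≠ ge z} := by
        ext z; exact ne_comm
      rw [eq] at t
      exact t
    have hd : (1 / 2) * dHdH H Pe Pe' = ⨆ p : H × H,
        |(Pe {z | p.1.1 z ≠ p.2.1 z}).toReal - (Pe' {z | p.1.1 z ≠ p.2.1 z}).toReal| := by
      rw [dHdH]; ring
    simp only [risk01] at *
    linarith
  have := le_ciInf key
  linarith [this]
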